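/- The set M = {(a₁,a₂,a₃,a₄) ∈ ℕ⁴ : 2a₁ + a₄ = a₂ + a₃} is a submonoid of ℕ⁴, and it is generated as a monoid by the five elements (1,2,0,0), (1,1,1,0), (1,0,2,0), (0,1,0,1), (0,0,1,1). -/

import Mathlib

/-!
`M` is the kernel of the weight map `a ↦ 2a₁ - a₂ - a₃ + a₄` on `ℕ⁴`, so it is a submonoid,
and it is saturated: if `g ≤ a` both lie in `M`, so does `a - g`. Hence it suffices to see that
every nonzero `a ∈ M` dominates one of the five generators, and then descend on `a`. If `a₁ > 0`
then `a₂ + a₃ ≥ 2`, and one of `(1,2,0,0)`, `(1,1,1,0)`, `(1,0,2,0)` fits under `a`; if `a₁ = 0`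
then `a₄ = a₂ + a₃ > 0`, and `(0,1,0,1)` or `(0,0,1,1)` fits.
-/

theorem AddSubmonoid.le_closure_of_forall_exists_add {α : Type*} [AddCommMonoid α]
    [PartialOrder α] [IsOrderedCancelAddMonoid α] [CanonicallyOrderedAdd α] [WellFoundedLT α]
    {M : AddSubmonoid α} {s : Set α}
    (h : ∀ a ∈ M, a ≠ 0 → ∃ g ∈ s, g ≠ 0 ∧ ∃ b ∈ M, a = g + b) :
    M ≤ AddSubmonoid.closure s := by
  intro a
  induction a using WellFoundedLT.induction with
  | _ a ih =>
    intro ha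
    rcases eq_or_ne a 0 with rfl | ha0
    · exact zero_mem _
    obtain ⟨g, hgs, hg0, b, hbM, rfl⟩ := h a ha ha0
    have hb : b < g + b := lt_add_of_pos_left b (pos_iff_ne_zero.2 hg0)
    exact add_mem (AddSubmonoid.subset_closure hgs) (ih b hb hbM)

theorem AddMonoidHom.mker_eq_closure_of_forall_exists_le {α G : Type*} [AddCommMonoid α]
    [PartialOrder α] [IsOrderedCancelAddMonoid α] [CanonicallyOrderedAdd α] [WellFoundedLT α]
    [AddGroup G] (f : α →+ G) {s : Set α} (hs0 : 0 ∉ s) (hsf : s ⊆ mker f)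
    (h : ∀ a ∈ mker f, a ≠ 0 → ∃ g ∈ s, g ≤ a) :
    mker f = AddSubmonoid.closure s := by
  refine le_antisymm (AddSubmonoid.le_closure_of_forall_exists_add fun a ha ha0 => ?_)
    (AddSubmonoid.closure_le.2 hsf)
  obtain ⟨g, hgs, hga⟩ := h a ha ha0
  obtain ⟨b, rfl⟩ := exists_add_of_le hga
  have hfg : f g = 0 := hsf hgs
  have hfb : f b = 0 := by simpa [mem_mker, hfg] using ha
  exact ⟨g, hgs, ne_of_mem_of_not_mem hgs hs0, b, hfb, rfl⟩

def weight : (Fin 4 → ℕ) →+ ℤ where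
  toFun a := 2 * a 0 - a 1 - a 2 + a 3
  map_zero' := by simp
  map_add' a b := by push_cast [Pi.add_apply]; ring

theorem mem_mker_weight {a : Fin 4 → ℕ} :
    a ∈ AddMonoidHom.mker weight ↔ 2 * a 0 + a 3 = a 1 + a 2 := by
  simp only [AddMonoidHom.mem_mker, weight, AddMonoidHom.coe_mk, ZeroHom.coe_mk]
  omega

def invariantGenerators : Set (Fin 4 → ℕ) :=
  {![1,2,0,0], ![1,1,1,0], ![1,0,2,0], ![0,1,0,1], ![0,0,1,1]}

theorem vec4_le_iff {x₀ x₁ x₂ x₃ : ℕ} {a : Fin 4 → ℕ} :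
    ![x₀, x₁, x₂, x₃] ≤ a ↔ x₀ ≤ a 0 ∧ x₁ ≤ a 1 ∧ x₂ ≤ a 2 ∧ x₃ ≤ a 3 := by
  simp [Pi.le_def, Fin.forall_fin_succ]

theorem exists_invariantGenerator_le {a : Fin 4 → ℕ} (ha : 2 * a 0 + a 3 = a 1 + a 2)
    (ha0 : a ≠ 0) : ∃ g ∈ invariantGenerators, g ≤ a := by
  have hpos : a 0 ≠ 0 ∨ a 1 ≠ 0 ∨ a 2 ≠ 0 ∨ a 3 ≠ 0 := by
    contrapose! ha0
    ext i; fin_cases i <;> simp [ha0]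
  simp only [invariantGenerators, Set.mem_insert_iff, Set.mem_singleton_iff,
    exists_eq_or_imp, exists_eq_left, vec4_le_iff]
  omega

/-- The set `M = {a ∈ ℕ⁴ | 2a₁ + a₄ = a₂ + a₃}` is a submonoid of `ℕ⁴` (it contains `0`
and is closed under addition), and it is generated as a monoid by the five elements. -/
theorem invariant_monomial_monoid :
    (0 : Fin 4 → ℕ) ∈ {a : Fin 4 → ℕ | 2 * a 0 + a 3 = a 1 + a 2} ∧
    (∀ a ∈ {a : Fin 4 → ℕ | 2 * a 0 + a 3 = a 1 + a 2},
      ∀ b ∈ {a : Fin 4 → ℕ | 2 * a 0 + a 3 = a 1 + a 2},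
        a + b ∈ {a : Fin 4 → ℕ | 2 * a 0 + a 3 = a 1 + a 2}) ∧
    {a : Fin 4 → ℕ | 2 * a 0 + a 3 = a 1 + a 2} =
      ↑(AddSubmonoid.closure
        ({![1,2,0,0], ![1,1,1,0], ![1,0,2,0], ![0,1,0,1], ![0,0,1,1]} :
          Set (Fin 4 → ℕ))) := by
  have hM : {a : Fin 4 → ℕ | 2 * a 0 + a 3 = a 1 + a 2} = AddMonoidHom.mker weight := by
    ext a; exact mem_mker_weight.symm
  have hgen : AddMonoidHom.mker weight = AddSubmonoid.closure invariantGenerators := by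
    refine weight.mker_eq_closure_of_forall_exists_le ?_ ?_ fun a ha ha0 =>
      exists_invariantGenerator_le (mem_mker_weight.1 ha) ha0
    · simp [invariantGenerators, funext_iff, Fin.forall_fin_succ]
    · simp only [invariantGenerators, Set.insert_subset_iff, Set.singleton_subset_iff,
        SetLike.mem_coe, mem_mker_weight]
      simp
  rw [hM]
  exact ⟨zero_mem _, fun a ha b hb => add_mem ha hb, congrArg SetLike.coe hgen⟩
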